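/- arXiv:0901.4283 — 4 statements merged into one kernel-verified Lean document; each statement's English description precedes it below -/
import Mathlib

section
/- For every triple of matrices A, B, C in SU(2) there exist real numbers p, q, r such that det(λA + μB + νC) = λ² + μ² + ν² + 2pλμ + 2qλν + 2rμν for all complex λ, μ, ν, and these numbers satisfy −1 ≤ p ≤ 1, −1 ≤ q ≤ 1, −1 ≤ r ≤ 1 and 1 − p² − q² − r² + 2pqr ≥ 0. -/
set_option autoImplicit false
set_option maxHeartbeats 1000000

open Matrix

private lemma su2_struct (U : Matrix (Fin 2) (Fin 2) ℂ)
    (hU : U ∈ Matrix.specialUnitaryGroup (Fin 2) ℂ) :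
    U 1 1 = starRingEnd ℂ (U 0 0) ∧ U 1 0 = - starRingEnd ℂ (U 0 1) ∧
      U 0 0 * starRingEnd ℂ (U 0 0) + U 0 1 * starRingEnd ℂ (U 0 1) = 1 := by
  obtain ⟨hu, hdet⟩ := Matrix.mem_specialUnitaryGroup_iff.mp hU
  have h1 : star U * U = 1 := Matrix.mem_unitaryGroup_iff'.mp hu
  have h2 : U * star U = 1 := Matrix.mem_unitaryGroup_iff.mp hu
  have hinv : U⁻¹ = star U := Matrix.inv_eq_left_inv h1
  have hadj : star U = U.adjugate := by
    rw [← hinv, Matrix.inv_def, hdet, Ring.inverse_one, one_smul]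
  have hA := Matrix.adjugate_fin_two U
  have e11 : star U 1 1 = U 0 0 := by rw [hadj, hA]; simp
  have e10 : star U 1 0 = - U 1 0 := by rw [hadj, hA]; simp
  have hnorm : (U * star U) 0 0 = (1 : Matrix (Fin 2) (Fin 2) ℂ) 0 0 := by rw [h2]
  refine ⟨?_, ?_, ?_⟩
  · have h : (starRingEnd ℂ) (U 1 1) = U 0 0 := by
      simpa [Matrix.star_apply] using e11
    rw [← h, Complex.conj_conj]
  · have h : (starRingEnd ℂ) (U 0 1) = - U 1 0 := by
      simpa [Matrix.star_apply] using e10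
    rw [h, neg_neg]
  · simpa [Matrix.mul_apply, Fin.sum_univ_two, Matrix.star_apply, Matrix.one_apply]
      using hnorm

private lemma dot_bounds (u1 u2 u3 u4 v1 v2 v3 v4 : ℝ)
    (hu : u1^2 + u2^2 + u3^2 + u4^2 = 1) (hv : v1^2 + v2^2 + v3^2 + v4^2 = 1) :
    -1 ≤ u1*v1 + u2*v2 + u3*v3 + u4*v4 ∧ u1*v1 + u2*v2 + u3*v3 + u4*v4 ≤ 1 := by
  constructor
  · nlinarith [sq_nonneg (u1+v1), sq_nonneg (u2+v2), sq_nonneg (u3+v3), sq_nonneg (u4+v4)]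
  · nlinarith [sq_nonneg (u1-v1), sq_nonneg (u2-v2), sq_nonneg (u3-v3), sq_nonneg (u4-v4)]

private lemma gram_nonneg (u1 u2 u3 u4 v1 v2 v3 v4 w1 w2 w3 w4 : ℝ)
    (hu : u1^2 + u2^2 + u3^2 + u4^2 = 1) (hv : v1^2 + v2^2 + v3^2 + v4^2 = 1)
    (hw : w1^2 + w2^2 + w3^2 + w4^2 = 1) :
    0 ≤ 1 - (u1*v1 + u2*v2 + u3*v3 + u4*v4)^2 - (u1*w1 + u2*w2 + u3*w3 + u4*w4)^2
        - (v1*w1 + v2*w2 + v3*w3 + v4*w4)^2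
        + 2*(u1*v1 + u2*v2 + u3*v3 + u4*v4)*(u1*w1 + u2*w2 + u3*w3 + u4*w4)
          *(v1*w1 + v2*w2 + v3*w3 + v4*w4) := by
  have key : 1 - (u1*v1 + u2*v2 + u3*v3 + u4*v4)^2 - (u1*w1 + u2*w2 + u3*w3 + u4*w4)^2
      - (v1*w1 + v2*w2 + v3*w3 + v4*w4)^2
      + 2*(u1*v1 + u2*v2 + u3*v3 + u4*v4)*(u1*w1 + u2*w2 + u3*w3 + u4*w4)
        *(v1*w1 + v2*w2 + v3*w3 + v4*w4)
      = (u1*(v2*w3 - v3*w2) - u2*(v1*w3 - v3*w1) + u3*(v1*w2 - v2*w1))^2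
      + (u1*(v2*w4 - v4*w2) - u2*(v1*w4 - v4*w1) + u4*(v1*w2 - v2*w1))^2
      + (u1*(v3*w4 - v4*w3) - u3*(v1*w4 - v4*w1) + u4*(v1*w3 - v3*w1))^2
      + (u2*(v3*w4 - v4*w3) - u3*(v2*w4 - v4*w2) + u4*(v2*w3 - v3*w2))^2 := by
    linear_combination
      ((v1*w1 + v2*w2 + v3*w3 + v4*w4)^2
        - (v1^2+v2^2+v3^2+v4^2)*(w1^2+w2^2+w3^2+w4^2)) * hu +
      ((u1*w1 + u2*w2 + u3*w3 + u4*w4)^2 - (w1^2+w2^2+w3^2+w4^2)) * hv +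
      ((u1*v1 + u2*v2 + u3*v3 + u4*v4)^2 - 1) * hw
  rw [key]
  positivity

/-- For every triple of matrices `A, B, C` in `SU(2)` there exist real numbers
`p, q, r` such that `det (λ•A + μ•B + ν•C) = λ² + μ² + ν² + 2pλμ + 2qλν + 2rμν` for all
complex `λ, μ, ν`, and these numbers satisfy `−1 ≤ p, q, r ≤ 1` and
`1 − p² − q² − r² + 2pqr ≥ 0`. -/
theorem spectral_curve_of_SU2_triple
    (A B C : Matrix.specialUnitaryGroup (Fin 2) ℂ) :
    ∃ p q r : ℝ,
      (∀ l m n : ℂ,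
        Matrix.det (l • (A : Matrix (Fin 2) (Fin 2) ℂ) + m • (B : Matrix (Fin 2) (Fin 2) ℂ)
            + n • (C : Matrix (Fin 2) (Fin 2) ℂ))
          = l ^ 2 + m ^ 2 + n ^ 2 + 2 * (p : ℂ) * l * m + 2 * (q : ℂ) * l * n
            + 2 * (r : ℂ) * m * n) ∧
      (-1 ≤ p ∧ p ≤ 1) ∧ (-1 ≤ q ∧ q ≤ 1) ∧ (-1 ≤ r ∧ r ≤ 1) ∧
      0 ≤ 1 - p ^ 2 - q ^ 2 - r ^ 2 + 2 * p * q * r := by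
  obtain ⟨hA1, hA2, hA3⟩ := su2_struct (A : Matrix (Fin 2) (Fin 2) ℂ) A.2
  obtain ⟨hB1, hB2, hB3⟩ := su2_struct (B : Matrix (Fin 2) (Fin 2) ℂ) B.2
  obtain ⟨hC1, hC2, hC3⟩ := su2_struct (C : Matrix (Fin 2) (Fin 2) ℂ) C.2
  set a := (A : Matrix (Fin 2) (Fin 2) ℂ) 0 0 with ha
  set b := (A : Matrix (Fin 2) (Fin 2) ℂ) 0 1 with hb
  set c := (B : Matrix (Fin 2) (Fin 2) ℂ) 0 0 with hc
  set d := (B : Matrix (Fin 2) (Fin 2) ℂ) 0 1 with hd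
  set e := (C : Matrix (Fin 2) (Fin 2) ℂ) 0 0 with he
  set f := (C : Matrix (Fin 2) (Fin 2) ℂ) 0 1 with hf
  clear_value a b c d e f
  have hu : a.re^2 + a.im^2 + b.re^2 + b.im^2 = 1 := by
    have h := congrArg Complex.re hA3
    simp only [Complex.add_re, Complex.mul_re, Complex.conj_re, Complex.conj_im,
      Complex.one_re] at h
    nlinarith [h]
  have hv : c.re^2 + c.im^2 + d.re^2 + d.im^2 = 1 := by
    have h := congrArg Complex.re hB3
    simp only [Complex.add_re, Complex.mul_re, Complex.conj_re, Complex.conj_im,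
      Complex.one_re] at h
    nlinarith [h]
  have hw : e.re^2 + e.im^2 + f.re^2 + f.im^2 = 1 := by
    have h := congrArg Complex.re hC3
    simp only [Complex.add_re, Complex.mul_re, Complex.conj_re, Complex.conj_im,
      Complex.one_re] at h
    nlinarith [h]
  refine ⟨a.re*c.re + a.im*c.im + b.re*d.re + b.im*d.im,
    a.re*e.re + a.im*e.im + b.re*f.re + b.im*f.im,
    c.re*e.re + c.im*e.im + d.re*f.re + d.im*f.im,
    ?_, dot_bounds _ _ _ _ _ _ _ _ hu hv, dot_bounds _ _ _ _ _ _ _ _ hu hw,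
    dot_bounds _ _ _ _ _ _ _ _ hv hw, gram_nonneg _ _ _ _ _ _ _ _ _ _ _ _ hu hv hw⟩
  intro l m n
  have hp : a * starRingEnd ℂ c + starRingEnd ℂ a * c + b * starRingEnd ℂ d
      + starRingEnd ℂ b * d
      = 2 * ((a.re*c.re + a.im*c.im + b.re*d.re + b.im*d.im : ℝ) : ℂ) := by
    apply Complex.ext <;>
      simp [Complex.add_re, Complex.add_im, Complex.mul_re, Complex.mul_im,
        Complex.conj_re, Complex.conj_im, Complex.ofReal_re, Complex.ofReal_im] <;> ring
  have hq : a * starRingEnd ℂ e + starRingEnd ℂ a * e + b * starRingEnd ℂ f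
      + starRingEnd ℂ b * f
      = 2 * ((a.re*e.re + a.im*e.im + b.re*f.re + b.im*f.im : ℝ) : ℂ) := by
    apply Complex.ext <;>
      simp [Complex.add_re, Complex.add_im, Complex.mul_re, Complex.mul_im,
        Complex.conj_re, Complex.conj_im, Complex.ofReal_re, Complex.ofReal_im] <;> ring
  have hr : c * starRingEnd ℂ e + starRingEnd ℂ c * e + d * starRingEnd ℂ f
      + starRingEnd ℂ d * f
      = 2 * ((c.re*e.re + c.im*e.im + d.re*f.re + d.im*f.im : ℝ) : ℂ) := by
    apply Complex.ext <;>
      simp [Complex.add_re, Complex.add_im, Complex.mul_re, Complex.mul_im,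
        Complex.conj_re, Complex.conj_im, Complex.ofReal_re, Complex.ofReal_im] <;> ring
  rw [Matrix.det_fin_two]
  simp only [Matrix.add_apply, Matrix.smul_apply, smul_eq_mul, hA1, hA2, hB1, hB2,
    hC1, hC2, ← ha, ← hb, ← hc, ← hd, ← he, ← hf]
  linear_combination l^2 * hA3 + m^2 * hB3 + n^2 * hC3 + l*m*hp + l*n*hq + m*n*hr
end

section
/- For every point (p, q, r) ∈ ℝ³ satisfying −1 ≤ p ≤ 1, −1 ≤ q ≤ 1, −1 ≤ r ≤ 1 and 1 − p² − q² − r² + 2pqr ≥ 0, there exist matrices A, B, C in SU(2) such that det(λA + μB + νC) = λ² + μ² + ν² + 2pλμ + 2qλν + 2rμν for all complex λ, μ, ν. -/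
open Matrix Complex

/-! Send `v ∈ ℝ⁴` to the complex `2 × 2` matrix of the quaternion `v 0 + v 1 i + v 2 j + v 3 k`.
Its determinant is the complexification of the Euclidean norm square, so unit vectors go to
`SU(2)` and `det (λ A + μ B + ν C)` is the Gram form `Σ λᵢ λⱼ ⟨vᵢ, vⱼ⟩` of the three vectors.
It remains to realise the Gram matrix `[[1, p, q], [p, 1, r], [q, r, 1]]` by unit vectors, a
Cholesky factorisation: take `1`, `(p, √(1 - p²))` and `(q, s, t)` with `√(1 - p²) s = r - p q`;
the inequality defining `Δ` is `(r - p q)² ≤ (1 - p²)(1 - q²)`, which makes `s² ≤ 1 - q²`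
possible, also when `p² = 1`. -/

noncomputable def quaternionMatrix (v : Fin 4 → ℝ) : Matrix (Fin 2) (Fin 2) ℂ :=
  !![v 0 + v 1 * I, v 2 + v 3 * I; -v 2 + v 3 * I, v 0 - v 1 * I]

lemma quaternionMatrix_mul_star (v : Fin 4 → ℝ) :
    quaternionMatrix v * star (quaternionMatrix v) = ((v ⬝ᵥ v : ℝ) : ℂ) • 1 := by
  ext i j
  fin_cases i <;> fin_cases j <;>
    simp [quaternionMatrix, mul_apply, star_apply, dotProduct, Fin.sum_univ_four,
      Complex.ext_iff] <;>
    constructor <;> ring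

lemma det_smul_add_smul_add_smul_quaternionMatrix (u v w : Fin 4 → ℝ) (l m n : ℂ) :
    det (l • quaternionMatrix u + m • quaternionMatrix v + n • quaternionMatrix w)
      = l ^ 2 * (u ⬝ᵥ u : ℝ) + m ^ 2 * (v ⬝ᵥ v : ℝ) + n ^ 2 * (w ⬝ᵥ w : ℝ)
        + 2 * l * m * (u ⬝ᵥ v : ℝ) + 2 * l * n * (u ⬝ᵥ w : ℝ) + 2 * m * n * (v ⬝ᵥ w : ℝ) := by
  simp only [det_fin_two, quaternionMatrix, Matrix.add_apply, Matrix.smul_apply, of_apply,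
    cons_val', cons_val_zero, cons_val_one, empty_val', cons_val_fin_one, smul_eq_mul,
    dotProduct, Fin.sum_univ_four]
  push_cast
  linear_combination (-(l * u 1 + m * v 1 + n * w 1) ^ 2 - (l * u 3 + m * v 3 + n * w 3) ^ 2) * I_sq

lemma quaternionMatrix_mem_specialUnitaryGroup {v : Fin 4 → ℝ} (hv : v ⬝ᵥ v = 1) :
    quaternionMatrix v ∈ specialUnitaryGroup (Fin 2) ℂ := by
  refine mem_specialUnitaryGroup_iff.2 ⟨mem_unitaryGroup_iff.2 ?_, ?_⟩
  · rw [quaternionMatrix_mul_star, hv, ofReal_one, one_smul]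
  · simpa [hv] using det_smul_add_smul_add_smul_quaternionMatrix v 0 0 1 0 0

lemma exists_mul_eq_of_sq_le_sq_mul {β u w : ℝ} (hβ : 0 ≤ β) (hw : 0 ≤ w)
    (h : u ^ 2 ≤ β ^ 2 * w) : ∃ s, β * s = u ∧ s ^ 2 ≤ w := by
  rcases hβ.eq_or_lt with rfl | hβ
  · exact ⟨0, by nlinarith [sq_nonneg u], by simpa using hw⟩
  · refine ⟨u / β, mul_div_cancel₀ u hβ.ne', ?_⟩
    rw [div_pow, div_le_iff₀ (by positivity)]
    linarith

lemma exists_unit_vectors_with_dotProduct {p q r : ℝ} (hp : p ^ 2 ≤ 1) (hq : q ^ 2 ≤ 1)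
    (hΔ : 0 ≤ 1 - p ^ 2 - q ^ 2 - r ^ 2 + 2 * p * q * r) :
    ∃ u v w : Fin 4 → ℝ, u ⬝ᵥ u = 1 ∧ v ⬝ᵥ v = 1 ∧ w ⬝ᵥ w = 1 ∧
      u ⬝ᵥ v = p ∧ u ⬝ᵥ w = q ∧ v ⬝ᵥ w = r := by
  set β := √(1 - p ^ 2)
  have hβ : β ^ 2 = 1 - p ^ 2 := Real.sq_sqrt (by linarith)
  obtain ⟨s, hs, hs2⟩ : ∃ s, β * s = r - p * q ∧ s ^ 2 ≤ 1 - q ^ 2 :=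
    exists_mul_eq_of_sq_le_sq_mul (Real.sqrt_nonneg _) (by linarith) (by rw [hβ]; linarith)
  have ht : √(1 - q ^ 2 - s ^ 2) ^ 2 = 1 - q ^ 2 - s ^ 2 := Real.sq_sqrt (by linarith)
  refine ⟨![1, 0, 0, 0], ![p, β, 0, 0], ![q, s, √(1 - q ^ 2 - s ^ 2), 0], ?_, ?_, ?_, ?_, ?_, ?_⟩ <;>
    simp [dotProduct, Fin.sum_univ_four]
  · linear_combination hβ
  · linear_combination ht
  · linear_combination hs

theorem SU2_triple_of_point_in_Delta_general
    (p q r : ℝ) (hp : -1 ≤ p ∧ p ≤ 1) (hq : -1 ≤ q ∧ q ≤ 1)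
    (hΔ : 0 ≤ 1 - p ^ 2 - q ^ 2 - r ^ 2 + 2 * p * q * r) :
    ∃ A B C : Matrix.specialUnitaryGroup (Fin 2) ℂ,
      ∀ l m n : ℂ,
        Matrix.det (l • (A : Matrix (Fin 2) (Fin 2) ℂ) + m • (B : Matrix (Fin 2) (Fin 2) ℂ)
            + n • (C : Matrix (Fin 2) (Fin 2) ℂ))
          = l ^ 2 + m ^ 2 + n ^ 2 + 2 * (p : ℂ) * l * m + 2 * (q : ℂ) * l * n
            + 2 * (r : ℂ) * m * n := by
  obtain ⟨u, v, w, hu, hv, hw, huv, huw, hvw⟩ := exists_unit_vectors_with_dotProduct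
    (sq_le_one_iff_abs_le_one p |>.2 (abs_le.2 hp))
    (sq_le_one_iff_abs_le_one q |>.2 (abs_le.2 hq)) hΔ
  refine ⟨⟨_, quaternionMatrix_mem_specialUnitaryGroup hu⟩,
    ⟨_, quaternionMatrix_mem_specialUnitaryGroup hv⟩,
    ⟨_, quaternionMatrix_mem_specialUnitaryGroup hw⟩, fun l m n => ?_⟩
  rw [det_smul_add_smul_add_smul_quaternionMatrix, hu, hv, hw, huv, huw, hvw]
  push_cast
  ring

/-- every point of the body `Δ` arises as the spectral invariants of a triple
of `SU(2)` matrices. -/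
theorem SU2_triple_of_point_in_Delta
    (p q r : ℝ) (hp : -1 ≤ p ∧ p ≤ 1) (hq : -1 ≤ q ∧ q ≤ 1) (hr : -1 ≤ r ∧ r ≤ 1)
    (hΔ : 0 ≤ 1 - p ^ 2 - q ^ 2 - r ^ 2 + 2 * p * q * r) :
    ∃ A B C : Matrix.specialUnitaryGroup (Fin 2) ℂ,
      ∀ l m n : ℂ,
        Matrix.det (l • (A : Matrix (Fin 2) (Fin 2) ℂ) + m • (B : Matrix (Fin 2) (Fin 2) ℂ)
            + n • (C : Matrix (Fin 2) (Fin 2) ℂ))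
          = l ^ 2 + m ^ 2 + n ^ 2 + 2 * (p : ℂ) * l * m + 2 * (q : ℂ) * l * n
            + 2 * (r : ℂ) * m * n :=
  SU2_triple_of_point_in_Delta_general p q r hp hq hΔ
end

section
/- If two triples (A, B, C) and (A', B', C') of matrices in SU(2) have the same spectral invariants, i.e. det(λA + μB + νC) = det(λA' + μB' + νC') for all complex λ, μ, ν, then they lie in the same double coset of the diagonal subgroup: there exist U, V ∈ SU(2) such that A' = UAV, B' = UBV and C' = UCV. -/
/-!
Put `P = A⁻¹B` and `Q = A⁻¹C`. For `X, Y ∈ SU(2)` one has `det (X + Y) = 2 + tr (X⁻¹Y)`, so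
the spectral invariants determine `tr P`, `tr Q` and `tr (P⁻¹Q) = tr (B⁻¹C)`, and it suffices to
conjugate the pair `(P, Q)` simultaneously to `(P', Q')`: if `P' = V⁻¹PV` and `Q' = V⁻¹QV`,
then `U = A'V⁻¹A⁻¹` works.

By their common trace, `P` and `P'` are conjugate to the same `D = diag(e^{iθ}, e^{-iθ})`,
which leaves the diagonal torus as the freedom to match `Q`. If `sin θ = 0`, `D = ±1` is
central and equal traces suffice. Otherwise `tr Q` and `tr (D⁻¹Q)` determine the diagonal of
`Q`, so the off-diagonal entries of `Q` and `Q'` have equal modulus and differ by a phase,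
which conjugation by the torus adjusts.
-/

set_option autoImplicit false

open Matrix Complex ComplexConjugate

lemma Matrix.det_add_fin_two {R : Type*} [CommRing R] (A B : Matrix (Fin 2) (Fin 2) R) :
    (A + B).det = A.det + B.det + (adjugate A * B).trace := by
  simp only [det_fin_two, adjugate_fin_two, trace_fin_two, add_apply, mul_apply, Fin.sum_univ_two,
    of_apply, cons_val', cons_val_zero, cons_val_one, cons_val_fin_one]
  ring

lemma Matrix.star_fin_two_of {α : Type*} [CommSemiring α] [StarRing α] (a b c d : α) :
    star !![a, b; c, d] =
      !![starRingEnd α a, starRingEnd α c; starRingEnd α b, starRingEnd α d] := by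
  ext i j; fin_cases i <;> fin_cases j <;> rfl

lemma Complex.exists_exp_mul_I_mul_eq_of_norm_eq {z w : ℂ} (h : ‖z‖ = ‖w‖) :
    ∃ φ : ℝ, w = exp (φ * I) * z := by
  refine ⟨arg w - arg z, ?_⟩
  calc w = ‖z‖ * exp (arg w * I) := by rw [h, norm_mul_exp_arg_mul_I]
    _ = exp ((arg w - arg z : ℝ) * I) * (‖z‖ * exp (arg z * I)) := by
      rw [mul_left_comm, ← exp_add]
      congr 2
      push_cast
      ring
    _ = _ := by rw [norm_mul_exp_arg_mul_I]

namespace Matrix.specialUnitaryGroup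

section

variable {n α : Type*} [DecidableEq n] [Fintype n] [CommRing α] [StarRing α]

lemma coe_inv (A : specialUnitaryGroup n α) : (A⁻¹).1 = star A.1 := rfl

lemma adjugate_coe (A : specialUnitaryGroup n α) : adjugate A.1 = star A.1 := by
  obtain ⟨hU, hdet⟩ := mem_specialUnitaryGroup_iff.mp A.2
  calc adjugate A.1 = star A.1 * A.1 * adjugate A.1 := by
        rw [Unitary.star_mul_self_of_mem hU, one_mul]
    _ = star A.1 := by rw [mul_assoc, mul_adjugate, hdet, one_smul, mul_one]

lemma trace_coe_inv_mul_mul (V X : specialUnitaryGroup n α) :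
    trace (V⁻¹ * X * V).1 = trace X.1 := by
  rw [Submonoid.coe_mul, trace_mul_comm, ← Submonoid.coe_mul, mul_inv_cancel_left]

end

end Matrix.specialUnitaryGroup

lemma Matrix.of_mem_specialUnitaryGroup_fin_two_iff {a b c d : ℂ} :
    !![a, b; c, d] ∈ specialUnitaryGroup (Fin 2) ℂ ↔
      d = conj a ∧ c = -conj b ∧ normSq a + normSq b = 1 := by
  constructor
  · intro h
    have hadj := specialUnitaryGroup.adjugate_coe ⟨_, h⟩
    have hdet := (mem_specialUnitaryGroup_iff.mp h).2
    simp only [adjugate_fin_two_of, star_fin_two_of, ← Matrix.ext_iff, Fin.forall_fin_two,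
      of_apply, cons_val', cons_val_zero, cons_val_one, empty_val', cons_val_fin_one] at hadj
    obtain ⟨⟨rfl, hb⟩, -, -⟩ := hadj
    have hc : c = -conj b := by rw [← map_neg, hb, conj_conj]
    refine ⟨rfl, hc, ?_⟩
    rw [det_fin_two_of, hc] at hdet
    exact_mod_cast (show (normSq a + normSq b : ℂ) = 1 by
      rw [← mul_conj, ← mul_conj]; linear_combination hdet)
  · rintro ⟨rfl, rfl, h⟩
    have h' : a * conj a + b * conj b = 1 := by rw [mul_conj, mul_conj]; exact_mod_cast h
    refine mem_specialUnitaryGroup_iff.mpr ⟨mem_unitaryGroup_iff.mpr ?_, ?_⟩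
    · rw [star_fin_two_of, mul_fin_two, one_fin_two]
      simp only [conj_conj, map_neg]
      ring_nf
      rw [h']
    · rw [det_fin_two_of]; linear_combination h'

local notation "SU₂" => Matrix.specialUnitaryGroup (Fin 2) ℂ

namespace Matrix.specialUnitaryGroup

lemma coe_eq_fin_two (A : SU₂) :
    A.1 = !![A.1 0 0, A.1 0 1; -conj (A.1 0 1), conj (A.1 0 0)] := by
  have h := of_mem_specialUnitaryGroup_fin_two_iff.mp (A.1.eta_fin_two ▸ A.2)
  conv_lhs => rw [A.1.eta_fin_two, h.1, h.2.1]

lemma normSq_add_normSq (A : SU₂) : normSq (A.1 0 0) + normSq (A.1 0 1) = 1 :=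
  (of_mem_specialUnitaryGroup_fin_two_iff.mp (A.1.eta_fin_two ▸ A.2)).2.2

lemma ext_fin_two {A B : SU₂} (h₀ : A.1 0 0 = B.1 0 0) (h₁ : A.1 0 1 = B.1 0 1) : A = B :=
  Subtype.ext <| by rw [coe_eq_fin_two A, coe_eq_fin_two B, h₀, h₁]

lemma trace_coe_fin_two (A : SU₂) : trace A.1 = A.1 0 0 + conj (A.1 0 0) := by
  conv_lhs => rw [coe_eq_fin_two A]
  rw [trace_fin_two_of]

lemma det_coe_add_coe (A B : SU₂) : det (A.1 + B.1) = 2 + trace (A⁻¹ * B).1 := by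
  rw [det_add_fin_two, adjugate_coe, (mem_specialUnitaryGroup_iff.mp A.2).2,
    (mem_specialUnitaryGroup_iff.mp B.2).2, one_add_one_eq_two, Submonoid.coe_mul, coe_inv]

noncomputable def diagExp (θ : ℝ) : SU₂ :=
  ⟨!![exp (θ * I), 0; 0, exp (-(θ * I))], of_mem_specialUnitaryGroup_fin_two_iff.mpr
    ⟨by rw [← Complex.exp_conj, map_mul, conj_ofReal, conj_I, mul_neg], by simp,
      by rw [normSq_eq_norm_sq, norm_exp_ofReal_mul_I, map_zero]; norm_num⟩⟩

lemma coe_diagExp (θ : ℝ) : (diagExp θ).1 = !![exp (θ * I), 0; 0, exp (-(θ * I))] := rfl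

lemma coe_diagExp_eq_cos_sin (θ : ℝ) :
    (diagExp θ).1 = !![Real.cos θ + Real.sin θ * I, 0; 0, Real.cos θ - Real.sin θ * I] := by
  rw [coe_diagExp, ← neg_mul, ← ofReal_neg, exp_mul_I, exp_mul_I, ← ofReal_cos, ← ofReal_sin,
    ← ofReal_cos, ← ofReal_sin, Real.cos_neg, Real.sin_neg, ofReal_neg, neg_mul,
    ← sub_eq_add_neg]

lemma diagExp_add (θ φ : ℝ) : diagExp (θ + φ) = diagExp θ * diagExp φ :=
  Subtype.ext <| by
    simp only [Submonoid.coe_mul, coe_diagExp, mul_fin_two, ofReal_add, add_mul, neg_add, exp_add]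
    simp

lemma diagExp_zero : diagExp 0 = 1 :=
  Subtype.ext <| by simp [coe_diagExp, one_fin_two]

lemma inv_diagExp (θ : ℝ) : (diagExp θ)⁻¹ = diagExp (-θ) :=
  inv_eq_of_mul_eq_one_right <| by rw [← diagExp_add, add_neg_cancel, diagExp_zero]

lemma commute_diagExp (θ φ : ℝ) : Commute (diagExp θ) (diagExp φ) := by
  rw [Commute, SemiconjBy, ← diagExp_add, ← diagExp_add, add_comm]

lemma inv_mul_diagExp_mul_of_sin_eq_zero {θ : ℝ} (h : Real.sin θ = 0) (W : SU₂) :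
    W⁻¹ * diagExp θ * W = diagExp θ := by
  have hD : (diagExp θ).1 = (Real.cos θ : ℂ) • 1 := by
    rw [coe_diagExp_eq_cos_sin, h]
    ext i j; fin_cases i <;> fin_cases j <;> simp
  have hc : Commute (diagExp θ) W := Subtype.ext <| by
    simp only [Submonoid.coe_mul, hD, smul_mul_assoc, mul_smul_comm, one_mul, mul_one]
  rw [mul_assoc, hc.eq, inv_mul_cancel_left]

lemma exists_diagExp_conj_eq {Q Q' : SU₂} (h : Q.1 0 0 = Q'.1 0 0) :
    ∃ φ : ℝ, Q' = (diagExp φ)⁻¹ * Q * diagExp φ := by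
  have hnorm : ‖Q.1 0 1‖ = ‖Q'.1 0 1‖ := by
    have hQ := normSq_add_normSq Q
    have hQ' := normSq_add_normSq Q'
    rw [h] at hQ
    rw [← sq_eq_sq₀ (norm_nonneg _) (norm_nonneg _), ← normSq_eq_norm_sq,
      ← normSq_eq_norm_sq]
    linarith
  obtain ⟨ψ, hψ⟩ := exists_exp_mul_I_mul_eq_of_norm_eq hnorm
  refine ⟨-ψ / 2, ext_fin_two ?_ ?_⟩
  · simp only [inv_diagExp, Submonoid.coe_mul, coe_diagExp, mul_apply, Fin.sum_univ_two, of_apply,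
      cons_val', cons_val_zero, cons_val_one, cons_val_fin_one, mul_zero, zero_mul, add_zero, h]
    rw [mul_right_comm, ← exp_add, ofReal_neg, neg_mul, neg_add_cancel, exp_zero, one_mul]
  · simp only [inv_diagExp, Submonoid.coe_mul, coe_diagExp, mul_apply, Fin.sum_univ_two, of_apply,
      cons_val', cons_val_zero, cons_val_one, cons_val_fin_one, mul_zero, zero_mul, add_zero, hψ]
    rw [mul_right_comm, ← exp_add]
    push_cast
    ring_nf

lemma coe_zero_zero_eq_of_trace_eq {θ : ℝ} (hθ : Real.sin θ ≠ 0) {Q Q' : SU₂}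
    (h : trace Q.1 = trace Q'.1)
    (hD : trace ((diagExp θ)⁻¹ * Q).1 = trace ((diagExp θ)⁻¹ * Q').1) :
    Q.1 0 0 = Q'.1 0 0 := by
  have htr (X : SU₂) : trace ((diagExp θ)⁻¹ * X).1 =
      (Real.cos θ - Real.sin θ * I) * X.1 0 0
        + (Real.cos θ + Real.sin θ * I) * conj (X.1 0 0) := by
    conv_lhs => rw [Submonoid.coe_mul, coe_inv, coe_diagExp_eq_cos_sin, coe_eq_fin_two X]
    rw [star_fin_two_of, mul_fin_two, trace_fin_two_of]
    simp only [map_add, map_sub, map_mul, conj_ofReal, conj_I, map_zero]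
    ring
  rw [htr, htr] at hD
  rw [trace_coe_fin_two, trace_coe_fin_two] at h
  have : (2 * Real.sin θ * I : ℂ) * (Q.1 0 0 - Q'.1 0 0) = 0 := by
    linear_combination (Real.cos θ + Real.sin θ * I) * h - hD
  have hne : (2 * Real.sin θ * I : ℂ) ≠ 0 :=
    mul_ne_zero (mul_ne_zero two_ne_zero (ofReal_ne_zero.mpr hθ)) I_ne_zero
  exact sub_eq_zero.mp ((mul_eq_zero.mp this).resolve_left hne)

lemma re_sq_add_im_sq_add_normSq (P : SU₂) :
    (P.1 0 0).re ^ 2 + (P.1 0 0).im ^ 2 + normSq (P.1 0 1) = 1 := by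
  rw [← normSq_add_normSq P, normSq_apply (P.1 0 0)]; ring

lemma coe_diagExp_arccos {t : ℝ} (ht : t ^ 2 ≤ 1) :
    (diagExp (Real.arccos t)).1 = !![t + √(1 - t ^ 2) * I, 0; 0, t - √(1 - t ^ 2) * I] := by
  rw [coe_diagExp_eq_cos_sin, Real.cos_arccos (by nlinarith) (by nlinarith), Real.sin_arccos]

lemma exists_mul_eq_mul_diagExp_of_im_lt {P : SU₂}
    (h : (P.1 0 0).im < √(1 - (P.1 0 0).re ^ 2)) :
    ∃ V : SU₂, P * V = V * diagExp (Real.arccos (P.1 0 0).re) := by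
  set a := P.1 0 0 with ha
  set b := P.1 0 1 with hb
  set t := a.re
  set α := a.im
  set s := √(1 - t ^ 2)
  have hnorm := re_sq_add_im_sq_add_normSq P
  have hb2 := normSq_nonneg b
  have hs2 : s ^ 2 = 1 - t ^ 2 := Real.sq_sqrt (by nlinarith)
  have hs : 0 < s := lt_of_le_of_ne (Real.sqrt_nonneg _) fun h0 => by
    rw [← h0] at hs2 h; nlinarith
  set c := √(2 * s * (s - α))
  have hc : 0 < c := Real.sqrt_pos.mpr (by nlinarith)
  have hc2 : c ^ 2 = 2 * s * (s - α) := Real.sq_sqrt (by nlinarith)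
  have hbb : b * conj b = s ^ 2 - α ^ 2 := by
    rw [mul_conj]; exact_mod_cast (by linarith : normSq b = s ^ 2 - α ^ 2)
  set p : ℂ := b / c
  set q : ℂ := ((s - α) / c : ℝ) * I with hq
  have hmem : normSq p + normSq q = 1 := by
    rw [normSq_div, normSq_ofReal, normSq_mul, normSq_ofReal, normSq_I]
    field_simp
    nlinarith
  -- `(p, -conj q)` is a unit eigenvector of `P` for the eigenvalue `t + s I = e^{iθ}`.
  refine ⟨⟨!![p, q; -conj q, conj p],
    of_mem_specialUnitaryGroup_fin_two_iff.mpr ⟨rfl, rfl, hmem⟩⟩, ext_fin_two ?_ ?_⟩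
  · simp only [Submonoid.coe_mul, coe_diagExp_arccos (by nlinarith : t ^ 2 ≤ 1), mul_apply,
      Fin.sum_univ_two, of_apply, cons_val', cons_val_zero, cons_val_one, cons_val_fin_one,
      ← ha, ← hb, mul_zero, add_zero]
    rw [map_mul, conj_ofReal, conj_I, ← re_add_im a]
    push_cast
    ring
  · simp only [Submonoid.coe_mul, coe_diagExp_arccos (by nlinarith : t ^ 2 ≤ 1), mul_apply,
      Fin.sum_univ_two, of_apply, cons_val', cons_val_zero, cons_val_one, cons_val_fin_one,
      ← ha, ← hb, mul_zero, zero_add]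
    rw [map_div₀, conj_ofReal, mul_div_assoc', hbb, ← re_add_im a, hq, ofReal_div, ofReal_sub]
    linear_combination (↑s - ↑α) * (↑s + ↑α) / ↑c * I_sq

lemma exists_conj_eq_diagExp (P : SU₂) :
    ∃ V : SU₂, V⁻¹ * P * V = diagExp (Real.arccos (P.1 0 0).re) := by
  have hnorm := re_sq_add_im_sq_add_normSq P
  have hb2 := normSq_nonneg (P.1 0 1)
  suffices ∃ V : SU₂, P * V = V * diagExp (Real.arccos (P.1 0 0).re) by
    obtain ⟨V, hV⟩ := this
    exact ⟨V, by rw [mul_assoc, hV, inv_mul_cancel_left]⟩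
  have him : (P.1 0 0).im ≤ √(1 - (P.1 0 0).re ^ 2) :=
    (le_abs_self _).trans (Real.abs_le_sqrt (by nlinarith))
  rcases him.eq_or_lt with him | him
  · have hs2 : √(1 - (P.1 0 0).re ^ 2) ^ 2 = 1 - (P.1 0 0).re ^ 2 := Real.sq_sqrt (by nlinarith)
    have hb0 : P.1 0 1 = 0 := normSq_eq_zero.mp (by rw [him] at hnorm; linarith)
    refine ⟨1, ?_⟩
    rw [mul_one, one_mul]
    apply ext_fin_two
    · rw [coe_diagExp_arccos (by nlinarith), ← him, re_add_im]; rfl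
    · rw [coe_diagExp_arccos (by nlinarith), hb0]; rfl
  · exact exists_mul_eq_mul_diagExp_of_im_lt him

lemma re_eq_of_trace_eq {A B : SU₂} (h : trace A.1 = trace B.1) :
    (A.1 0 0).re = (B.1 0 0).re := by
  rw [trace_coe_fin_two, trace_coe_fin_two, add_conj, add_conj, ofReal_inj] at h
  linarith

lemma exists_conj_of_trace_eq {Q Q' : SU₂} (h : trace Q.1 = trace Q'.1) :
    ∃ W : SU₂, Q' = W⁻¹ * Q * W := by
  obtain ⟨V₁, hV₁⟩ := exists_conj_eq_diagExp Q
  obtain ⟨V₂, hV₂⟩ := exists_conj_eq_diagExp Q'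
  rw [← re_eq_of_trace_eq h, ← hV₁] at hV₂
  refine ⟨V₁ * V₂⁻¹, ?_⟩
  calc Q' = V₂ * (V₂⁻¹ * Q' * V₂) * V₂⁻¹ := by group
    _ = _ := by rw [hV₂]; group

lemma exists_conj_fixing_diagExp (θ : ℝ) {Q Q' : SU₂} (h : trace Q.1 = trace Q'.1)
    (hD : trace ((diagExp θ)⁻¹ * Q).1 = trace ((diagExp θ)⁻¹ * Q').1) :
    ∃ W : SU₂, W⁻¹ * diagExp θ * W = diagExp θ ∧ Q' = W⁻¹ * Q * W := by
  by_cases hθ : Real.sin θ = 0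
  · obtain ⟨W, hW⟩ := exists_conj_of_trace_eq h
    exact ⟨W, inv_mul_diagExp_mul_of_sin_eq_zero hθ W, hW⟩
  · obtain ⟨φ, hφ⟩ := exists_diagExp_conj_eq (coe_zero_zero_eq_of_trace_eq hθ h hD)
    refine ⟨diagExp φ, ?_, hφ⟩
    rw [mul_assoc, (commute_diagExp θ φ).eq, inv_mul_cancel_left]

lemma exists_simultaneous_conj_of_trace_eq {P Q P' Q' : SU₂} (hP : trace P.1 = trace P'.1)
    (hQ : trace Q.1 = trace Q'.1) (hPQ : trace (P⁻¹ * Q).1 = trace (P'⁻¹ * Q').1) :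
    ∃ V : SU₂, P' = V⁻¹ * P * V ∧ Q' = V⁻¹ * Q * V := by
  obtain ⟨V₁, hV₁⟩ := exists_conj_eq_diagExp P
  obtain ⟨V₂, hV₂⟩ := exists_conj_eq_diagExp P'
  rw [← re_eq_of_trace_eq hP] at hV₂
  have hconj (V X Y : SU₂) : (V⁻¹ * X * V)⁻¹ * (V⁻¹ * Y * V) = V⁻¹ * (X⁻¹ * Y) * V := by
    group
  obtain ⟨W, hWD, hWQ⟩ :=
    exists_conj_fixing_diagExp _ (Q := V₁⁻¹ * Q * V₁) (Q' := V₂⁻¹ * Q' * V₂)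
      (by rw [trace_coe_inv_mul_mul, trace_coe_inv_mul_mul, hQ])
      (by
        conv_lhs => rw [← hV₁]
        conv_rhs => rw [← hV₂]
        rw [hconj, hconj, trace_coe_inv_mul_mul, trace_coe_inv_mul_mul, hPQ])
  refine ⟨V₁ * W * V₂⁻¹, ?_, ?_⟩
  · calc P' = V₂ * (V₂⁻¹ * P' * V₂) * V₂⁻¹ := by group
      _ = V₂ * (W⁻¹ * (V₁⁻¹ * P * V₁) * W) * V₂⁻¹ := by rw [hV₂, hV₁, hWD]
      _ = _ := by group
  · calc Q' = V₂ * (V₂⁻¹ * Q' * V₂) * V₂⁻¹ := by group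
      _ = V₂ * (W⁻¹ * (V₁⁻¹ * Q * V₁) * W) * V₂⁻¹ := by rw [hWQ]
      _ = _ := by group

lemma trace_inv_mul_eq_of_det_add_eq {A B A' B' : SU₂}
    (h : det (A.1 + B.1) = det (A'.1 + B'.1)) :
    trace (A⁻¹ * B).1 = trace (A'⁻¹ * B').1 := by
  rwa [det_coe_add_coe, det_coe_add_coe, add_right_inj] at h

end Matrix.specialUnitaryGroup

/-- two triples of `SU(2)` matrices with the same spectral invariants lie in the
same double coset of the diagonal subgroup. -/
theorem same_spectral_curve_iff_same_double_coset
    (A B C A' B' C' : Matrix.specialUnitaryGroup (Fin 2) ℂ)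
    (h : ∀ l m n : ℂ,
      Matrix.det (l • (A : Matrix (Fin 2) (Fin 2) ℂ) + m • (B : Matrix (Fin 2) (Fin 2) ℂ)
          + n • (C : Matrix (Fin 2) (Fin 2) ℂ))
        = Matrix.det (l • (A' : Matrix (Fin 2) (Fin 2) ℂ) + m • (B' : Matrix (Fin 2) (Fin 2) ℂ)
          + n • (C' : Matrix (Fin 2) (Fin 2) ℂ))) :
    ∃ U V : Matrix.specialUnitaryGroup (Fin 2) ℂ,
      (A' : Matrix (Fin 2) (Fin 2) ℂ) = (U : Matrix (Fin 2) (Fin 2) ℂ) * A * V ∧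
      (B' : Matrix (Fin 2) (Fin 2) ℂ) = (U : Matrix (Fin 2) (Fin 2) ℂ) * B * V ∧
      (C' : Matrix (Fin 2) (Fin 2) ℂ) = (U : Matrix (Fin 2) (Fin 2) ℂ) * C * V := by
  have hAB := specialUnitaryGroup.trace_inv_mul_eq_of_det_add_eq (by simpa using h 1 1 0)
  have hAC := specialUnitaryGroup.trace_inv_mul_eq_of_det_add_eq (by simpa using h 1 0 1)
  have hBC := specialUnitaryGroup.trace_inv_mul_eq_of_det_add_eq (by simpa using h 0 1 1)
  obtain ⟨V, hB, hC⟩ := specialUnitaryGroup.exists_simultaneous_conj_of_trace_eq hAB hAC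
    (by simpa only [_root_.mul_inv_rev, inv_inv, mul_assoc, mul_inv_cancel_left] using hBC)
  refine ⟨A' * V⁻¹ * A⁻¹, V, ?_, ?_, ?_⟩ <;> simp only [← Submonoid.coe_mul] <;> congr 1
  · group
  · rw [← mul_inv_cancel_left A' B', hB]; group
  · rw [← mul_inv_cancel_left A' C', hC]; group
end

section
/- Let n, m, k be natural numbers such that n + m + k is odd, or such that one of the triangle inequalities n ≤ m + k, m ≤ n + k, k ≤ n + m fails. Then every polynomial f in the six complex variables x₁, x₂, y₁, y₂, z₁, z₂ that is homogeneous of degree n in (x₁, x₂), of degree m in (y₁, y₂), of degree k in (z₁, z₂), and satisfies f(xg, yg, zg) = f(x, y, z) for all g ∈ SU(2), is identically zero. -/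
set_option autoImplicit false

open MvPolynomial

/-- The Fock inner product on polynomials: monomials are pairwise orthogonal and
`‖∏ Xᵢ^{kᵢ}‖² = ∏ kᵢ!`. -/
noncomputable def fockInner (f g : MvPolynomial (Fin 6) ℂ) : ℂ :=
  ∑ d ∈ f.support, f.coeff d * star (g.coeff d) * ∏ i, ((d i).factorial : ℂ)

/-- `Ξ[α,β,γ] = (x₁y₂−x₂y₁)^α (y₁z₂−y₂z₁)^γ (z₁x₂−z₂x₁)^β`, with variables
`x₁,x₂,y₁,y₂,z₁,z₂` numbered `0,…,5`. -/
noncomputable def XiPoly (α β γ : ℕ) : MvPolynomial (Fin 6) ℂ :=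
  (X 0 * X 3 - X 1 * X 2) ^ α * (X 2 * X 5 - X 3 * X 4) ^ γ * (X 4 * X 1 - X 5 * X 0) ^ β

/-- The action `(T(A)⊗T(B)⊗T(C)) f (x,y,z) = f(xA, yB, zC)` of a triple of `2×2` matrices
on polynomials in six variables. -/
noncomputable def actTriple (A B M : Matrix (Fin 2) (Fin 2) ℂ)
    (f : MvPolynomial (Fin 6) ℂ) : MvPolynomial (Fin 6) ℂ :=
  MvPolynomial.aeval
    ![C (A 0 0) * X 0 + C (A 1 0) * X 1,
      C (A 0 1) * X 0 + C (A 1 1) * X 1,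
      C (B 0 0) * X 2 + C (B 1 0) * X 3,
      C (B 0 1) * X 2 + C (B 1 1) * X 3,
      C (M 0 0) * X 4 + C (M 1 0) * X 5,
      C (M 0 1) * X 4 + C (M 1 1) * X 5] f

/-- The spherical function `Φ_{α,β,γ}(A,B,C)`. -/
noncomputable def PhiSph (α β γ : ℕ) (A B M : Matrix (Fin 2) (Fin 2) ℂ) : ℂ :=
  fockInner (actTriple A B M (XiPoly α β γ)) (XiPoly α β γ)

/-!
Invariance under the torus elements `diag(u, u⁻¹)` with `|u| = 1` forces every monomial of `f`
to have weight zero: its degree in `x₁, y₁, z₁` equals its degree in `x₂, y₂, z₂`. This already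
excludes odd `n + m + k`. Weight zero gives invariance under the whole complex torus, and
`SL(2, ℂ)` is generated by `SU(2)` and the complex torus (up to conjugation by the torus, every
transvection is a real rotation times a diagonal matrix times a real rotation), so `f` is
`SL(2, ℂ)`-invariant.
If `n > m + k` or `m > n + k`, a monomial of weight zero cannot be a power of `x₁` times a
power of `y₂` times a monomial in `z`, so `f` vanishes at `x = (a, 0)`, `y = (0, 1)`. Since
`SL(2, ℂ)` moves these points onto the dense set where `det(x, y) ≠ 0`, `f = 0`. The case
`k > n + m` reduces to this one by cycling `x, y, z`.
-/

open Matrix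

def Matrix.rotation (c s : ℝ) : Matrix (Fin 2) (Fin 2) ℂ :=
  !![(c : ℂ), s; -s, c]

lemma Matrix.rotation_mem_specialUnitaryGroup (c s : ℝ) (h : c ^ 2 + s ^ 2 = 1) :
    rotation c s ∈ specialUnitaryGroup (Fin 2) ℂ := by
  have h' : (c : ℂ) ^ 2 + (s : ℂ) ^ 2 = 1 := by exact_mod_cast h
  rw [rotation, mem_specialUnitaryGroup_iff, mem_unitaryGroup_iff, star_eq_conjTranspose,
    det_fin_two_of]
  refine ⟨?_, by linear_combination h'⟩
  ext i j
  fin_cases i <;> fin_cases j <;> simp [mul_apply, Fin.sum_univ_two] <;>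
    first | ring1 | linear_combination h'

lemma Matrix.diagonal_mem_specialUnitaryGroup (u : ℂ) (hu : ‖u‖ = 1) :
    diagonal ![u, u⁻¹] ∈ specialUnitaryGroup (Fin 2) ℂ := by
  have hu0 : u ≠ 0 := norm_ne_zero_iff.mp (by rw [hu]; exact one_ne_zero)
  have hstar : star u = u⁻¹ := by
    rw [Complex.inv_def, Complex.normSq_eq_norm_sq, hu]; simp
  rw [mem_specialUnitaryGroup_iff, mem_unitaryGroup_iff, star_eq_conjTranspose,
    diagonal_conjTranspose, diagonal_mul_diagonal, det_diagonal, Fin.prod_univ_two, ← diagonal_one]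
  refine ⟨congrArg diagonal (funext fun i => ?_), by simp [hu0]⟩
  fin_cases i <;> simp [hstar, hu0]

lemma Matrix.transvection_zero_one_fin_two (c : ℂ) :
    transvection (0 : Fin 2) 1 c = !![1, c; 0, 1] := by
  ext i j
  fin_cases i <;> fin_cases j <;> simp [transvection]

lemma Matrix.transvection_one_zero_fin_two (c : ℂ) :
    transvection (1 : Fin 2) 0 c = !![1, 0; c, 1] := by
  ext i j
  fin_cases i <;> fin_cases j <;> simp [transvection]

section Generation

variable {S : Submonoid (Matrix (Fin 2) (Fin 2) ℂ)} (hK : specialUnitaryGroup (Fin 2) ℂ ≤ S)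
  (hT : ∀ u : ℂ, u ≠ 0 → diagonal ![u, u⁻¹] ∈ S)
include hK hT

lemma Matrix.transvection_zero_one_mem_of_specialUnitaryGroup_le (c : ℂ) :
    transvection 0 1 c ∈ S := by
  rcases eq_or_ne c 0 with rfl | hc
  · rw [transvection_zero]; exact S.one_mem
  obtain ⟨u, hu⟩ := IsAlgClosed.exists_pow_nat_eq (12 * c / 7) two_pos
  have hu0 : u ≠ 0 := by
    rintro rfl
    exact hc (by linear_combination -7 / 12 * hu)
  -- a singular value decomposition with rational rotations
  have hsvd :
      rotation (4 / 5) (-3 / 5) * diagonal ![4 / 3, (4 / 3)⁻¹] * rotation (3 / 5) (4 / 5) =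
        transvection 0 1 (7 / 12) := by
    simp only [rotation, diagonal_fin_two, transvection_zero_one_fin_two, mul_fin_two]
    ext i j
    fin_cases i <;> fin_cases j <;> norm_num
  have hconj : diagonal ![u, u⁻¹] * transvection 0 1 (7 / 12) * diagonal ![u⁻¹, u⁻¹⁻¹] =
      transvection 0 1 c := by
    simp only [diagonal_fin_two, transvection_zero_one_fin_two, mul_fin_two]
    ext i j
    fin_cases i <;> fin_cases j <;> simp [hu0]
    linear_combination 7 / 12 * hu
  rw [← hconj, ← hsvd]
  exact S.mul_mem (S.mul_mem (hT u hu0) (S.mul_mem (S.mul_mem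
    (hK (rotation_mem_specialUnitaryGroup _ _ (by norm_num))) (hT _ (by norm_num)))
    (hK (rotation_mem_specialUnitaryGroup _ _ (by norm_num))))) (hT _ (inv_ne_zero hu0))

lemma Matrix.transvection_one_zero_mem_of_specialUnitaryGroup_le (c : ℂ) :
    transvection 1 0 c ∈ S := by
  have hW : rotation 0 1 * transvection 0 1 (-c) * rotation 0 (-1) = transvection 1 0 c := by
    simp only [rotation, transvection_zero_one_fin_two, transvection_one_zero_fin_two, mul_fin_two]
    ext i j
    fin_cases i <;> fin_cases j <;> simp
  rw [← hW]
  exact S.mul_mem (S.mul_mem (hK (rotation_mem_specialUnitaryGroup _ _ (by norm_num)))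
    (transvection_zero_one_mem_of_specialUnitaryGroup_le hK hT _))
    (hK (rotation_mem_specialUnitaryGroup _ _ (by norm_num)))

theorem Matrix.mem_of_det_eq_one_of_specialUnitaryGroup_le {M : Matrix (Fin 2) (Fin 2) ℂ}
    (hM : M.det = 1) : M ∈ S := by
  refine diagonal_transvection_induction (· ∈ S) M (fun D hD => ?_) (fun t => ?_)
    (fun _ _ => S.mul_mem)
  · rw [hM, det_fin_two, diagonal_apply_eq, diagonal_apply_eq, diagonal_apply_ne _ zero_ne_one,
      diagonal_apply_ne _ one_ne_zero, mul_zero, sub_zero] at hD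
    have hD' : D = ![D 0, (D 0)⁻¹] := by
      funext i
      fin_cases i
      · rfl
      · exact eq_inv_of_mul_eq_one_right hD
    rw [hD']
    exact hT (D 0) (left_ne_zero_of_mul_eq_one hD)
  · obtain ⟨i, j, hij, c⟩ := t
    fin_cases i <;> fin_cases j
    exacts [absurd rfl hij, transvection_zero_one_mem_of_specialUnitaryGroup_le hK hT c,
      transvection_one_zero_mem_of_specialUnitaryGroup_le hK hT c, absurd rfl hij]

end Generation

lemma MvPolynomial.coeff_aeval_C_mul_X {σ R : Type*} [CommSemiring R] (c : σ → R)
    (f : MvPolynomial σ R) (d : σ →₀ ℕ) :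
    coeff d (aeval (fun i => C (c i) * X i) f) = (d.prod fun i k => c i ^ k) * coeff d f := by
  classical
  induction f using MvPolynomial.induction_on' with
  | monomial e r =>
    have : aeval (fun i => C (c i) * X i) (monomial e r) =
        monomial e ((e.prod fun i k => c i ^ k) * r) := by
      rw [aeval_monomial, Finsupp.prod, Finsupp.prod]
      simp only [mul_pow, Finset.prod_mul_distrib, ← map_pow, ← map_prod, prod_X_pow_eq_monomial,
        algebraMap_eq, C_mul_monomial, mul_one, mul_comm r]
    rw [this, coeff_monomial, coeff_monomial]
    split_ifs with h <;> simp [h]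
  | add p q hp hq => rw [map_add, coeff_add, coeff_add, hp, hq, mul_add]

lemma actTriple_actTriple (A B M A' B' M' : Matrix (Fin 2) (Fin 2) ℂ)
    (f : MvPolynomial (Fin 6) ℂ) :
    actTriple A B M (actTriple A' B' M' f) = actTriple (A * A') (B * B') (M * M') f := by
  simp only [actTriple]
  rw [← AlgHom.comp_apply, comp_aeval]
  congr 2
  funext i
  fin_cases i <;> simp [mul_apply, Fin.sum_univ_two] <;> ring

lemma actTriple_one (f : MvPolynomial (Fin 6) ℂ) : actTriple 1 1 1 f = f := by
  conv_rhs => rw [← aeval_X_left_apply f]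
  simp only [actTriple]
  congr 2
  funext i
  fin_cases i <;> simp

lemma coeff_actTriple_diagonal (a b : ℂ) (f : MvPolynomial (Fin 6) ℂ) (d : Fin 6 →₀ ℕ) :
    coeff d (actTriple (diagonal ![a, b]) (diagonal ![a, b]) (diagonal ![a, b]) f) =
      a ^ (d 0 + d 2 + d 4) * b ^ (d 1 + d 3 + d 5) * coeff d f := by
  have : actTriple (diagonal ![a, b]) (diagonal ![a, b]) (diagonal ![a, b]) f =
      aeval (fun i => C (![a, b, a, b, a, b] i) * X i) f := by
    simp only [actTriple]
    congr 2
    funext i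
    fin_cases i <;> simp
  rw [this, coeff_aeval_C_mul_X, Finsupp.prod_fintype _ _ (by simp), Fin.prod_univ_six]
  simp only [Fin.isValue, Matrix.cons_val]
  ring

lemma eval_actTriple (A B M : Matrix (Fin 2) (Fin 2) ℂ) (p : Fin 6 → ℂ)
    (f : MvPolynomial (Fin 6) ℂ) :
    eval p (actTriple A B M f) = eval ![p 0 * A 0 0 + p 1 * A 1 0, p 0 * A 0 1 + p 1 * A 1 1,
      p 2 * B 0 0 + p 3 * B 1 0, p 2 * B 0 1 + p 3 * B 1 1,
      p 4 * M 0 0 + p 5 * M 1 0, p 4 * M 0 1 + p 5 * M 1 1] f := by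
  rw [← coe_aeval_eq_eval, ← coe_aeval_eq_eval]
  refine (aeval_bind₁ p _ f).trans (congrArg (aeval · f) (funext fun i => ?_))
  fin_cases i <;> simp [mul_comm]

lemma actTriple_rename_addRight (A : Matrix (Fin 2) (Fin 2) ℂ) (f : MvPolynomial (Fin 6) ℂ) :
    actTriple A A A (rename (Equiv.addRight 2) f) =
      rename (Equiv.addRight 2) (actTriple A A A f) := by
  rw [actTriple, actTriple, aeval_rename]
  induction f using MvPolynomial.induction_on with
  | C a => simp
  | add p q hp hq => simp only [map_add, hp, hq]
  | mul_X p i hp =>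
    simp only [map_mul, hp]
    congr 1
    fin_cases i <;> simp

def actTripleStabilizer (f : MvPolynomial (Fin 6) ℂ) : Submonoid (Matrix (Fin 2) (Fin 2) ℂ) where
  carrier := {A | actTriple A A A f = f}
  mul_mem' {A B} (hA : actTriple A A A f = f) (hB : actTriple B B B f = f) :=
    show actTriple (A * B) (A * B) (A * B) f = f by rw [← actTriple_actTriple, hB, hA]
  one_mem' := actTriple_one f

/-- `diag(u, u⁻¹)` scales the monomial `X^d` by `u ^ (d 0 + d 2 + d 4 - (d 1 + d 3 + d 5))`. -/
def HasWeightZero (f : MvPolynomial (Fin 6) ℂ) : Prop :=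
  ∀ d ∈ f.support, d 0 + d 2 + d 4 = d 1 + d 3 + d 5

lemma hasWeightZero_of_specialUnitary {f : MvPolynomial (Fin 6) ℂ}
    (hinv : ∀ g ∈ specialUnitaryGroup (Fin 2) ℂ, actTriple g g g f = f) : HasWeightZero f := by
  intro d hd
  set a := d 0 + d 2 + d 4
  set b := d 1 + d 3 + d 5
  have hζ := Complex.isPrimitiveRoot_exp (a + b + 1) (by omega)
  set ζ := Complex.exp (2 * Real.pi * Complex.I / ↑(a + b + 1))
  have hcoeff := congrArg (coeff d)
    (hinv _ (diagonal_mem_specialUnitaryGroup ζ (hζ.norm'_eq_one (by omega))))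
  rw [coeff_actTriple_diagonal] at hcoeff
  have hpow : ζ ^ a * ζ⁻¹ ^ b = 1 := (mul_eq_right₀ (mem_support_iff.mp hd)).mp hcoeff
  refine hζ.pow_inj (by omega) (by omega) ?_
  have hζ0 : ζ ≠ 0 := hζ.ne_zero (by omega)
  rw [← mul_one (ζ ^ b), ← hpow, inv_pow]
  field_simp

lemma actTriple_diagonal_of_hasWeightZero {f : MvPolynomial (Fin 6) ℂ} (hf : HasWeightZero f)
    (u : ℂ) (hu : u ≠ 0) :
    actTriple (diagonal ![u, u⁻¹]) (diagonal ![u, u⁻¹]) (diagonal ![u, u⁻¹]) f = f := by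
  ext d
  rw [coeff_actTriple_diagonal]
  by_cases hd : d ∈ f.support
  · rw [hf d hd, inv_pow, mul_inv_cancel₀ (pow_ne_zero _ hu), one_mul]
  · rw [notMem_support_iff.mp hd, mul_zero]

theorem actTriple_eq_self_of_det_eq_one {f : MvPolynomial (Fin 6) ℂ}
    (hinv : ∀ g ∈ specialUnitaryGroup (Fin 2) ℂ, actTriple g g g f = f)
    {M : Matrix (Fin 2) (Fin 2) ℂ} (hM : M.det = 1) : actTriple M M M f = f :=
  mem_of_det_eq_one_of_specialUnitaryGroup_le (S := actTripleStabilizer f) hinv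
    (actTriple_diagonal_of_hasWeightZero (hasWeightZero_of_specialUnitary hinv)) hM

def IsTrihomogeneous (f : MvPolynomial (Fin 6) ℂ) (n m k : ℕ) : Prop :=
  ∀ d ∈ f.support, d 0 + d 1 = n ∧ d 2 + d 3 = m ∧ d 4 + d 5 = k

lemma IsTrihomogeneous.rename_addRight {f : MvPolynomial (Fin 6) ℂ} {n m k : ℕ}
    (hf : IsTrihomogeneous f n m k) : IsTrihomogeneous (rename (Equiv.addRight 2) f) k n m := by
  intro d hd
  rw [support_rename_of_injective (Equiv.injective _), Finset.mem_image] at hd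
  obtain ⟨d, hd, rfl⟩ := hd
  have h := Finsupp.mapDomain_apply (Equiv.injective (Equiv.addRight (2 : Fin 6))) d
  obtain ⟨hx, hy, hz⟩ := hf d hd
  exact ⟨by rw [← hz, ← h 4, ← h 5]; rfl, by rw [← hx, ← h 0, ← h 1]; rfl,
    by rw [← hy, ← h 2, ← h 3]; rfl⟩

lemma eq_zero_of_odd {f : MvPolynomial (Fin 6) ℂ} {n m k : ℕ} (hw : HasWeightZero f)
    (hf : IsTrihomogeneous f n m k) (hodd : Odd (n + m + k)) : f = 0 := by
  refine support_eq_empty.mp (Finset.eq_empty_of_forall_notMem fun d hd => ?_)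
  obtain ⟨r, hr⟩ := hodd
  have := hf d hd
  have := hw d hd
  omega

lemma eval_frame_eq_zero {f : MvPolynomial (Fin 6) ℂ} {n m k : ℕ} (hw : HasWeightZero f)
    (hf : IsTrihomogeneous f n m k) (hlt : m + k < n ∨ n + k < m) (a z₀ z₁ : ℂ) :
    eval ![a, 0, 0, 1, z₀, z₁] f = 0 := by
  rw [eval_eq']
  refine Finset.sum_eq_zero fun d hd => ?_
  have : d 1 ≠ 0 ∨ d 2 ≠ 0 := by
    have := hf d hd
    have := hw d hd
    omega
  rw [Fin.prod_univ_six]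
  rcases this with h | h <;> simp [zero_pow h]

lemma eq_zero_of_eval_frame_eq_zero {f : MvPolynomial (Fin 6) ℂ}
    (hSL : ∀ M : Matrix (Fin 2) (Fin 2) ℂ, M.det = 1 → actTriple M M M f = f)
    (hframe : ∀ a z₀ z₁ : ℂ, eval ![a, 0, 0, 1, z₀, z₁] f = 0) : f = 0 := by
  have hvanish : ∀ p : Fin 6 → ℂ, p 0 * p 3 - p 1 * p 2 ≠ 0 → eval p f = 0 := by
    intro p hδ
    set δ := p 0 * p 3 - p 1 * p 2
    set M : Matrix (Fin 2) (Fin 2) ℂ := !![p 0 / δ, p 1 / δ; p 2, p 3]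
    have hM : M.det = 1 := by
      rw [det_fin_two_of]; field_simp; rfl
    -- `(δ, 0) M = (p 0, p 1)`, `(0, 1) M = (p 2, p 3)` and `(z₀, z₁) M = (p 4, p 5)`
    calc eval p f
        = eval ![δ, 0, 0, 1, p 4 * p 3 - p 5 * p 2, (p 0 * p 5 - p 1 * p 4) / δ]
            (actTriple M M M f) := by
          rw [eval_actTriple]
          congr 2
          funext i
          fin_cases i <;> simp [M] <;> field_simp <;> simp only [δ] <;> ring
      _ = 0 := by rw [hSL _ hM, hframe]
  have hdet : (X 0 * X 3 - X 1 * X 2 : MvPolynomial (Fin 6) ℂ) ≠ 0 := by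
    intro h
    simpa using congrArg (eval ![1, 0, 0, 1, 0, 0]) h
  refine (mul_eq_zero.mp (MvPolynomial.funext fun p => ?_)).resolve_right hdet
  by_cases hp : p 0 * p 3 - p 1 * p 2 = 0
  · simp [hp]
  · simp [hvanish p hp]

lemma eq_zero_of_add_lt {f : MvPolynomial (Fin 6) ℂ} {n m k : ℕ}
    (hSL : ∀ M : Matrix (Fin 2) (Fin 2) ℂ, M.det = 1 → actTriple M M M f = f)
    (hf : IsTrihomogeneous f n m k) (hlt : m + k < n ∨ n + k < m) : f = 0 :=
  eq_zero_of_eval_frame_eq_zero hSL <| eval_frame_eq_zero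
    (hasWeightZero_of_specialUnitary fun _ hg => hSL _ (mem_specialUnitaryGroup_iff.mp hg).2)
    hf hlt

/-- if `n+m+k` is odd, or one of the triangle inequalities fails, then every
polynomial in six variables homogeneous of degree `n` in `(x₁,x₂)`, `m` in `(y₁,y₂)`,
`k` in `(z₁,z₂)` and invariant under the diagonal `SU(2)`-action is zero. -/
theorem no_invariant_vector (n m k : ℕ)
    (h : Odd (n + m + k) ∨ ¬(n ≤ m + k ∧ m ≤ n + k ∧ k ≤ n + m))
    (f : MvPolynomial (Fin 6) ℂ)
    (hhom : ∀ d ∈ f.support, d 0 + d 1 = n ∧ d 2 + d 3 = m ∧ d 4 + d 5 = k)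
    (hinv : ∀ g : Matrix.specialUnitaryGroup (Fin 2) ℂ,
      actTriple (g : Matrix (Fin 2) (Fin 2) ℂ) (g : Matrix (Fin 2) (Fin 2) ℂ)
        (g : Matrix (Fin 2) (Fin 2) ℂ) f = f) :
    f = 0 := by
  have hinv' : ∀ g ∈ specialUnitaryGroup (Fin 2) ℂ, actTriple g g g f = f :=
    fun g hg => hinv ⟨g, hg⟩
  have hSL : ∀ M : Matrix (Fin 2) (Fin 2) ℂ, M.det = 1 → actTriple M M M f = f :=
    fun M => actTriple_eq_self_of_det_eq_one hinv'
  rcases h with hodd | htri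
  · exact eq_zero_of_odd (hasWeightZero_of_specialUnitary hinv') hhom hodd
  rcases (by omega : m + k < n ∨ n + k < m ∨ n + m < k) with hlt | hlt | hlt
  · exact eq_zero_of_add_lt hSL hhom (Or.inl hlt)
  · exact eq_zero_of_add_lt hSL hhom (Or.inr hlt)
  · have hcycled : rename (Equiv.addRight 2) f = 0 :=
      eq_zero_of_add_lt (fun M hM => by rw [actTriple_rename_addRight, hSL M hM])
        (IsTrihomogeneous.rename_addRight hhom) (Or.inl (by omega))
    exact rename_injective _ (Equiv.injective _) (by rw [hcycled, map_zero])
end
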